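/- arXiv:2305.05492 — 2 statements merged into one kernel-verified Lean document; each statement's English description precedes it below -/
import Mathlib

section
/- Let (X,ϱ) be a complete and separable metric space, let η be a nonnegative finite Borel measure with finite first moment, c > 0, and q, q' ∈ X distinct, with μ := η + c·δ_q and ν := η + c·δ_{q'} probability measures and T := d₁(μ,ν) > 0. Suppose there exists z ∈ X with z ∉ {q,q'} and ϱ(q,z) + ϱ(z,q') = ϱ(q,q'). Set T' := d₁(μ, η + c·δ_z). Then the broken-line curve γ̃:[0,T] → W₁(X) given by γ̃(t) = η + (1 − t/T')·c·δ_q + (t/T')·c·δ_z for t ∈ [0,T'] and γ̃(t) = η + (1 − (t−T')/(T−T'))·c·δ_z + ((t−T')/(T−T'))·c·δ_{q'} for t ∈ (T',T] is a unit-speed geodesic from μ to ν passing through η + c·δ_z; in particular it differs from the linear interpolation t ↦ (1 − t/T)μ + (t/T)ν, so there exist at least two distinct unit-speed geodesics from μ to ν. -/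
open MeasureTheory Set
open scoped ENNReal

noncomputable section

/-- A coupling of `μ` and `ν` is a measure on `X × X` with marginals `μ` and `ν`. -/
def IsCoupling {X : Type*} [MeasurableSpace X] (μ ν : Measure X)
    (π : Measure (X × X)) : Prop :=
  π.map Prod.fst = μ ∧ π.map Prod.snd = ν

/-- The 1-Wasserstein distance: infimum over couplings of the integral of the distance. -/
noncomputable def W1 {X : Type*} [MeasurableSpace X] [PseudoEMetricSpace X]
    (μ ν : Measure X) : ℝ≥0∞ :=
  ⨅ (π : Measure (X × X)) (_ : IsCoupling μ ν π), ∫⁻ p, edist p.1 p.2 ∂π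

/-- `μ` has a finite first moment. -/
def HasFiniteFirstMoment {X : Type*} [MeasurableSpace X] [PseudoEMetricSpace X]
    (μ : Measure X) : Prop :=
  ∃ x₀ : X, ∫⁻ x, edist x x₀ ∂μ ≠ ⊤

/-- Membership in the 1-Wasserstein space: a Borel probability measure with finite
first moment. -/
def MemW1 {X : Type*} [MeasurableSpace X] [PseudoEMetricSpace X]
    (μ : Measure X) : Prop :=
  IsProbabilityMeasure μ ∧ HasFiniteFirstMoment μ

/-- A unit-speed geodesic in the 1-Wasserstein space, defined on `[a,b]`. -/
def IsUnitSpeedGeodesicOn {X : Type*} [MeasurableSpace X] [PseudoEMetricSpace X]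
    (γ : ℝ → Measure X) (a b : ℝ) : Prop :=
  (∀ t ∈ Icc a b, MemW1 (γ t)) ∧
  ∀ s ∈ Icc a b, ∀ t ∈ Icc a b, W1 (γ s) (γ t) = ENNReal.ofReal |s - t|

/-- The metric segment `[q,q']`. -/
def metricSegment {X : Type*} [PseudoMetricSpace X] (q q' : X) : Set X :=
  {r | dist q r + dist r q' = dist q q'}

/-- The metric `λ`-ratio set `M_λ(μ,ν)`. -/
def ratioSet {X : Type*} [MeasurableSpace X] [PseudoEMetricSpace X]
    (μ ν : Measure X) (lam : ℝ) : Set (Measure X) :=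
  {ξ | MemW1 ξ ∧ W1 μ ξ = ENNReal.ofReal lam * W1 μ ν ∧
       W1 ξ ν = ENNReal.ofReal (1 - lam) * W1 μ ν}

/-- The linear interpolation `t ↦ (1 - t/T) μ + (t/T) ν`. -/
noncomputable def linInterp {X : Type*} [MeasurableSpace X]
    (μ ν : Measure X) (T t : ℝ) : Measure X :=
  ENNReal.ofReal (1 - t / T) • μ + ENNReal.ofReal (t / T) • ν

/-- The relation `q ∼ q'`: any point saturating one of the three triangle
equalities must be `q` or `q'`. -/
def PointRel {X : Type*} [PseudoMetricSpace X] (q q' : X) : Prop :=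
  ∀ r : X,
    (dist q q' = dist q r + dist r q' → r = q ∨ r = q') ∧
    (dist r q = dist r q' + dist q' q → r = q ∨ r = q') ∧
    (dist q' r = dist q' q + dist q r → r = q ∨ r = q')

open Classical in
/-- The broken-line curve through `η + c δ_z`: first transport the atom from `q`
to `z` during `[0,T']`, then from `z` to `q'` during `[T',T]`. -/
noncomputable def brokenGeodesic {X : Type*} [MeasurableSpace X] (η : Measure X)
    (c T T' : ℝ) (q z q' : X) : ℝ → Measure X := fun t =>
  if t ≤ T' then
    η + ENNReal.ofReal ((1 - t / T') * c) • Measure.dirac q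
      + ENNReal.ofReal ((t / T') * c) • Measure.dirac z
  else
    η + ENNReal.ofReal ((1 - (t - T') / (T - T')) * c) • Measure.dirac z
      + ENNReal.ofReal (((t - T') / (T - T')) * c) • Measure.dirac q'

/-!
Every measure involved has the form `η + a₁ δ_q + a₂ δ_z + a₃ δ_{q'}` with `z` on the metric
segment `[q, q']`. Between two such measures in which mass only flows from `q` towards `q'`, the
1-Wasserstein distance is the transported mass times the distance travelled: a coupling that
routes mass through the middle atom gives the upper bound, and integrating the 1-Lipschitz
function `dist · q'` against both measures gives the matching lower bound. Along the broken line
and along the linear interpolation this cost grows at unit rate, so both are unit-speed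
geodesics; they differ at time `T'`, when the broken line has already emptied the atom at `q`.
-/

theorem ENNReal.ofReal_eq_ofReal_add_ofReal_sub {a b : ℝ} (hb : 0 ≤ b) (hba : b ≤ a) :
    ENNReal.ofReal a = ENNReal.ofReal b + ENNReal.ofReal (a - b) := by
  rw [← ENNReal.ofReal_add hb (sub_nonneg.2 hba), add_sub_cancel]

namespace W1

variable {X : Type*} [MeasurableSpace X] [PseudoEMetricSpace X]

theorem le_lintegral_of_isCoupling {μ ν : Measure X} {π : Measure (X × X)}
    (hπ : IsCoupling μ ν π) : W1 μ ν ≤ ∫⁻ p, edist p.1 p.2 ∂π :=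
  iInf₂_le π hπ

theorem comm (μ ν : Measure X) : W1 μ ν = W1 ν μ := by
  suffices ∀ μ ν : Measure X, W1 ν μ ≤ W1 μ ν from le_antisymm (this ν μ) (this μ ν)
  intro μ ν
  refine le_iInf₂ fun π hπ => ?_
  let σ : X × X ≃ᵐ X × X := MeasurableEquiv.prodComm
  have hσ : IsCoupling ν μ (π.map σ) := by
    constructor
    · rw [Measure.map_map measurable_fst σ.measurable]; exact hπ.2
    · rw [Measure.map_map measurable_snd σ.measurable]; exact hπ.1
  calc W1 ν μ ≤ ∫⁻ p, edist p.1 p.2 ∂(π.map σ) := le_lintegral_of_isCoupling hσ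
    _ = ∫⁻ p, edist p.1 p.2 ∂π := by
      rw [lintegral_map_equiv]; exact lintegral_congr fun p => edist_comm _ _

-- Weak Kantorovich duality, tested against the 1-Lipschitz potential `edist · x₀`.
theorem lintegral_edist_le_add [OpensMeasurableSpace X] (μ ν : Measure X) (x₀ : X) :
    ∫⁻ x, edist x x₀ ∂μ ≤ ∫⁻ x, edist x x₀ ∂ν + W1 μ ν := by
  simp only [W1, ENNReal.add_iInf]
  refine le_iInf₂ fun π hπ => ?_
  rw [← hπ.1, ← hπ.2, lintegral_map (by fun_prop) measurable_fst,
    lintegral_map (by fun_prop) measurable_snd, ← lintegral_add_left (by fun_prop)]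
  exact lintegral_mono fun p => (edist_triangle p.1 p.2 x₀).trans_eq (add_comm _ _)

theorem add_smul_dirac_le [MeasurableSingletonClass X] (κ : Measure X) (w₁ w₂ : ℝ≥0∞)
    (x₁ y₁ x₂ y₂ : X) :
    W1 (κ + w₁ • Measure.dirac x₁ + w₂ • Measure.dirac x₂)
        (κ + w₁ • Measure.dirac y₁ + w₂ • Measure.dirac y₂)
      ≤ w₁ * edist x₁ y₁ + w₂ * edist x₂ y₂ := by
  have hdiag : Measurable fun x : X => (x, x) := measurable_id.prodMk measurable_id
  let π := κ.map (fun x => (x, x)) + w₁ • Measure.dirac (x₁, y₁) + w₂ • Measure.dirac (x₂, y₂)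
  have hπ : IsCoupling (κ + w₁ • Measure.dirac x₁ + w₂ • Measure.dirac x₂)
      (κ + w₁ • Measure.dirac y₁ + w₂ • Measure.dirac y₂) π := by
    constructor
    · rw [Measure.map_add _ _ measurable_fst, Measure.map_add _ _ measurable_fst,
        Measure.map_smul, Measure.map_smul, Measure.map_dirac' measurable_fst,
        Measure.map_dirac' measurable_fst, Measure.map_map measurable_fst hdiag]
      simp [Function.comp_def]
    · rw [Measure.map_add _ _ measurable_snd, Measure.map_add _ _ measurable_snd,
        Measure.map_smul, Measure.map_smul, Measure.map_dirac' measurable_snd,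
        Measure.map_dirac' measurable_snd, Measure.map_map measurable_snd hdiag]
      simp [Function.comp_def]
  refine (le_lintegral_of_isCoupling hπ).trans ?_
  have hκ : ∫⁻ p, edist p.1 p.2 ∂(κ.map fun x => (x, x)) = 0 :=
    nonpos_iff_eq_zero.1 ((lintegral_map_le _ _).trans (by simp))
  simp only [π, lintegral_add_measure, lintegral_smul_measure, lintegral_dirac, hκ, zero_add,
    smul_eq_mul, le_rfl]

end W1

theorem HasFiniteFirstMoment.lintegral_edist_ne_top {X : Type*} [MeasurableSpace X]
    [PseudoMetricSpace X] {η : Measure X} [IsFiniteMeasure η] (hη : HasFiniteFirstMoment η)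
    (y : X) : ∫⁻ x, edist x y ∂η ≠ ⊤ := by
  obtain ⟨x₀, hx₀⟩ := hη
  have h : ∫⁻ x, edist x y ∂η ≤ ∫⁻ x, edist x x₀ ∂η + edist x₀ y * η univ := by
    rw [← lintegral_const, ← lintegral_add_right _ measurable_const]
    exact lintegral_mono fun x => edist_triangle _ _ _
  exact ne_top_of_le_ne_top (by finiteness [edist_ne_top x₀ y]) h

theorem isUnitSpeedGeodesicOn_of_W1_eq_sub {X : Type*} [MeasurableSpace X] [PseudoEMetricSpace X]
    {γ : ℝ → Measure X} {a b : ℝ} (hmem : ∀ t ∈ Icc a b, MemW1 (γ t))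
    (hW : ∀ s ∈ Icc a b, ∀ t ∈ Icc a b, s ≤ t → W1 (γ s) (γ t) = ENNReal.ofReal (t - s)) :
    IsUnitSpeedGeodesicOn γ a b := by
  refine ⟨hmem, fun s hs t ht => ?_⟩
  rcases le_total s t with hst | hts
  · rw [hW s hs t ht hst, abs_sub_comm, abs_of_nonneg (sub_nonneg.2 hst)]
  · rw [W1.comm, hW t ht s hs hts, abs_of_nonneg (sub_nonneg.2 hts)]

def threeAtom {X : Type*} [MeasurableSpace X] (η : Measure X) (x₁ x₂ x₃ : X)
    (a₁ a₂ a₃ : ℝ) : Measure X :=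
  η + ENNReal.ofReal a₁ • Measure.dirac x₁ + ENNReal.ofReal a₂ • Measure.dirac x₂
    + ENNReal.ofReal a₃ • Measure.dirac x₃

theorem threeAtom_singleton_left {X : Type*} [MeasurableSpace X] [MeasurableSingletonClass X]
    {η : Measure X} {x₁ x₂ x₃ : X} {a₁ a₂ a₃ : ℝ} (h₂ : x₂ ≠ x₁) (h₃ : x₃ ≠ x₁) :
    threeAtom η x₁ x₂ x₃ a₁ a₂ a₃ {x₁} = η {x₁} + ENNReal.ofReal a₁ := by
  simp [threeAtom, h₂, h₃]

section ThreeAtoms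

variable {X : Type*} [MeasurableSpace X] [PseudoMetricSpace X]

theorem W1.add_smul_dirac_le_ofReal [MeasurableSingletonClass X] (κ : Measure X) {u₁ u₂ : ℝ}
    (hu₁ : 0 ≤ u₁) (hu₂ : 0 ≤ u₂) (x₁ y₁ x₂ y₂ : X) :
    W1 (κ + ENNReal.ofReal u₁ • Measure.dirac x₁ + ENNReal.ofReal u₂ • Measure.dirac x₂)
        (κ + ENNReal.ofReal u₁ • Measure.dirac y₁ + ENNReal.ofReal u₂ • Measure.dirac y₂)
      ≤ ENNReal.ofReal (u₁ * dist x₁ y₁ + u₂ * dist x₂ y₂) := by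
  refine (W1.add_smul_dirac_le κ _ _ x₁ y₁ x₂ y₂).trans_eq ?_
  rw [edist_dist, edist_dist, ← ENNReal.ofReal_mul hu₁, ← ENNReal.ofReal_mul hu₂,
    ← ENNReal.ofReal_add (by positivity) (by positivity)]

variable {η : Measure X} {x₁ x₂ x₃ : X} {a₁ a₂ a₃ b₁ b₂ b₃ : ℝ}

theorem lintegral_edist_threeAtom [OpensMeasurableSpace X] (ha₁ : 0 ≤ a₁) (ha₂ : 0 ≤ a₂) :
    ∫⁻ x, edist x x₃ ∂threeAtom η x₁ x₂ x₃ a₁ a₂ a₃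
      = ∫⁻ x, edist x x₃ ∂η + ENNReal.ofReal (a₁ * dist x₁ x₃ + a₂ * dist x₂ x₃) := by
  have hf : Measurable fun x => edist x x₃ := by fun_prop
  rw [threeAtom, lintegral_add_measure, lintegral_add_measure, lintegral_add_measure,
    lintegral_smul_measure, lintegral_smul_measure, lintegral_smul_measure,
    lintegral_dirac' _ hf, lintegral_dirac' _ hf, lintegral_dirac' _ hf, edist_self, smul_zero,
    add_zero, edist_dist, edist_dist, smul_eq_mul, smul_eq_mul, ← ENNReal.ofReal_mul ha₁,
    ← ENNReal.ofReal_mul ha₂, add_assoc, ← ENNReal.ofReal_add (by positivity) (by positivity)]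

/-- The excess mass at `x₁` and the deficit at `x₃` are matched through the middle atom `x₂`,
which either supplies or absorbs the difference `a₂ - b₂`. -/
theorem W1_threeAtom_le [MeasurableSingletonClass X] (hseg : dist x₁ x₂ + dist x₂ x₃ = dist x₁ x₃)
    (ha₂ : 0 ≤ a₂) (ha₃ : 0 ≤ a₃) (hb₁ : 0 ≤ b₁) (hb₂ : 0 ≤ b₂)
    (hsum : a₁ + a₂ + a₃ = b₁ + b₂ + b₃) (h₁ : b₁ ≤ a₁) (h₃ : a₃ ≤ b₃) :
    W1 (threeAtom η x₁ x₂ x₃ a₁ a₂ a₃) (threeAtom η x₁ x₂ x₃ b₁ b₂ b₃)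
      ≤ ENNReal.ofReal ((a₁ - b₁) * dist x₁ x₂ + (b₃ - a₃) * dist x₂ x₃) := by
  rcases le_total b₂ a₂ with h₂ | h₂
  · have e₁ : threeAtom η x₁ x₂ x₃ a₁ a₂ a₃ = threeAtom η x₁ x₂ x₃ b₁ b₂ a₃
        + ENNReal.ofReal (a₁ - b₁) • Measure.dirac x₁
        + ENNReal.ofReal (a₂ - b₂) • Measure.dirac x₂ := by
      rw [threeAtom, threeAtom, ENNReal.ofReal_eq_ofReal_add_ofReal_sub hb₁ h₁,
        ENNReal.ofReal_eq_ofReal_add_ofReal_sub hb₂ h₂, add_smul, add_smul]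
      abel
    have e₂ : threeAtom η x₁ x₂ x₃ b₁ b₂ b₃ = threeAtom η x₁ x₂ x₃ b₁ b₂ a₃
        + ENNReal.ofReal (a₁ - b₁) • Measure.dirac x₃
        + ENNReal.ofReal (a₂ - b₂) • Measure.dirac x₃ := by
      rw [threeAtom, threeAtom, show b₃ = a₃ + (a₁ - b₁) + (a₂ - b₂) by linarith,
        ENNReal.ofReal_add (by linarith) (by linarith), ENNReal.ofReal_add ha₃ (by linarith),
        add_smul, add_smul]
      abel
    rw [e₁, e₂]
    refine (W1.add_smul_dirac_le_ofReal _ (by linarith) (by linarith) _ _ _ _).trans_eq ?_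
    congr 1
    linear_combination (b₁ - a₁) * hseg + dist x₂ x₃ * hsum
  · have e₁ : threeAtom η x₁ x₂ x₃ a₁ a₂ a₃ = threeAtom η x₁ x₂ x₃ b₁ a₂ a₃
        + ENNReal.ofReal (b₂ - a₂) • Measure.dirac x₁
        + ENNReal.ofReal (b₃ - a₃) • Measure.dirac x₁ := by
      rw [threeAtom, threeAtom, show a₁ = b₁ + (b₂ - a₂) + (b₃ - a₃) by linarith,
        ENNReal.ofReal_add (by linarith) (by linarith), ENNReal.ofReal_add hb₁ (by linarith),
        add_smul, add_smul]
      abel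
    have e₂ : threeAtom η x₁ x₂ x₃ b₁ b₂ b₃ = threeAtom η x₁ x₂ x₃ b₁ a₂ a₃
        + ENNReal.ofReal (b₂ - a₂) • Measure.dirac x₂
        + ENNReal.ofReal (b₃ - a₃) • Measure.dirac x₃ := by
      rw [threeAtom, threeAtom, ENNReal.ofReal_eq_ofReal_add_ofReal_sub ha₂ h₂,
        ENNReal.ofReal_eq_ofReal_add_ofReal_sub ha₃ h₃, add_smul, add_smul]
      abel
    rw [e₁, e₂]
    refine (W1.add_smul_dirac_le_ofReal _ (by linarith) (by linarith) _ _ _ _).trans_eq ?_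
    congr 1
    linear_combination (a₃ - b₃) * hseg - dist x₁ x₂ * hsum

theorem W1_threeAtom [OpensMeasurableSpace X] [MeasurableSingletonClass X]
    (hseg : dist x₁ x₂ + dist x₂ x₃ = dist x₁ x₃) (hη : ∫⁻ x, edist x x₃ ∂η ≠ ⊤)
    (ha₂ : 0 ≤ a₂) (ha₃ : 0 ≤ a₃) (hb₁ : 0 ≤ b₁) (hb₂ : 0 ≤ b₂)
    (hsum : a₁ + a₂ + a₃ = b₁ + b₂ + b₃) (h₁ : b₁ ≤ a₁) (h₃ : a₃ ≤ b₃) :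
    W1 (threeAtom η x₁ x₂ x₃ a₁ a₂ a₃) (threeAtom η x₁ x₂ x₃ b₁ b₂ b₃)
      = ENNReal.ofReal ((a₁ - b₁) * dist x₁ x₂ + (b₃ - a₃) * dist x₂ x₃) := by
  refine le_antisymm (W1_threeAtom_le hseg ha₂ ha₃ hb₁ hb₂ hsum h₁ h₃) ?_
  have hpot := W1.lintegral_edist_le_add (threeAtom η x₁ x₂ x₃ a₁ a₂ a₃)
    (threeAtom η x₁ x₂ x₃ b₁ b₂ b₃) x₃
  have hcost : 0 ≤ (a₁ - b₁) * dist x₁ x₂ + (b₃ - a₃) * dist x₂ x₃ := by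
    have := sub_nonneg.2 h₁; have := sub_nonneg.2 h₃; positivity
  have hsplit : a₁ * dist x₁ x₃ + a₂ * dist x₂ x₃
      = (b₁ * dist x₁ x₃ + b₂ * dist x₂ x₃)
        + ((a₁ - b₁) * dist x₁ x₂ + (b₃ - a₃) * dist x₂ x₃) := by
    linear_combination (b₁ - a₁) * hseg + dist x₂ x₃ * hsum
  rw [lintegral_edist_threeAtom (hb₁.trans h₁) ha₂, lintegral_edist_threeAtom hb₁ hb₂, hsplit,
    ENNReal.ofReal_add (by positivity) hcost, ← add_assoc] at hpot
  exact (ENNReal.add_le_add_iff_left (by finiteness)).1 hpot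

theorem memW1_threeAtom [OpensMeasurableSpace X] [IsFiniteMeasure η]
    (hη : HasFiniteFirstMoment η) (ha₁ : 0 ≤ a₁) (ha₂ : 0 ≤ a₂) (ha₃ : 0 ≤ a₃)
    (hmass : η univ + ENNReal.ofReal (a₁ + a₂ + a₃) = 1) :
    MemW1 (threeAtom η x₁ x₂ x₃ a₁ a₂ a₃) := by
  refine ⟨⟨?_⟩, x₃, ?_⟩
  · simpa [threeAtom, ENNReal.ofReal_add, add_assoc, ha₁, ha₂, ha₃, add_nonneg] using hmass
  · rw [lintegral_edist_threeAtom ha₁ ha₂]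
    exact ENNReal.add_ne_top.2 ⟨hη.lintegral_edist_ne_top x₃, ENNReal.ofReal_ne_top⟩

theorem isUnitSpeedGeodesicOn_threeAtom [OpensMeasurableSpace X] [MeasurableSingletonClass X]
    [IsFiniteMeasure η] (hη : HasFiniteFirstMoment η)
    (hseg : dist x₁ x₂ + dist x₂ x₃ = dist x₁ x₃) {γ : ℝ → Measure X} {f₁ f₂ f₃ : ℝ → ℝ}
    {a b m C : ℝ} (hγ : ∀ t ∈ Icc a b, γ t = threeAtom η x₁ x₂ x₃ (f₁ t) (f₂ t) (f₃ t))
    (hf : ∀ t ∈ Icc a b, 0 ≤ f₁ t ∧ 0 ≤ f₂ t ∧ 0 ≤ f₃ t)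
    (hsum : ∀ t ∈ Icc a b, f₁ t + f₂ t + f₃ t = m) (hmass : η univ + ENNReal.ofReal m = 1)
    (hf₁ : AntitoneOn f₁ (Icc a b)) (hf₃ : MonotoneOn f₃ (Icc a b))
    (hcost : ∀ t ∈ Icc a b, f₁ t * dist x₁ x₂ - f₃ t * dist x₂ x₃ = C - t) :
    IsUnitSpeedGeodesicOn γ a b := by
  refine isUnitSpeedGeodesicOn_of_W1_eq_sub (fun t ht => ?_) (fun s hs t ht hst => ?_)
  · obtain ⟨h₁, h₂, h₃⟩ := hf t ht
    rw [hγ t ht]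
    exact memW1_threeAtom hη h₁ h₂ h₃ (hsum t ht ▸ hmass)
  · obtain ⟨-, hs₂, hs₃⟩ := hf s hs
    obtain ⟨ht₁, ht₂, -⟩ := hf t ht
    rw [hγ s hs, hγ t ht, W1_threeAtom hseg (hη.lintegral_edist_ne_top x₃) hs₂ hs₃ ht₁ ht₂
      ((hsum s hs).trans (hsum t ht).symm) (hf₁ hs ht hst) (hf₃ hs ht hst)]
    congr 1
    linarith [hcost s hs, hcost t ht]

end ThreeAtoms

section BrokenGeodesic

variable {X : Type*} [MeasurableSpace X] {η : Measure X} {c T T' : ℝ} {q z q' : X}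

-- With the weights written through `max`, one formula covers both legs of the broken line.
theorem brokenGeodesic_eq_threeAtom (hT' : T' ≠ 0) (t : ℝ) :
    brokenGeodesic η c T T' q z q' t = threeAtom η q z q' (c * max (T' - t) 0 / T')
      (c - c * max (T' - t) 0 / T' - c * max (t - T') 0 / (T - T'))
      (c * max (t - T') 0 / (T - T')) := by
  unfold brokenGeodesic threeAtom
  split_ifs with ht
  · rw [max_eq_left (sub_nonneg.2 ht), max_eq_right (sub_nonpos.2 ht)]
    simp only [mul_zero, zero_div, ENNReal.ofReal_zero, zero_smul, add_zero, sub_zero]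
    rw [show (1 - t / T') * c = c * (T' - t) / T' by field_simp,
      show t / T' * c = c - c * (T' - t) / T' by field_simp; ring]
  · rw [max_eq_right (by linarith), max_eq_left (by linarith)]
    simp only [mul_zero, zero_div, ENNReal.ofReal_zero, zero_smul, add_zero, sub_zero]
    rw [show (1 - (t - T') / (T - T')) * c = c - c * (t - T') / (T - T') by ring,
      show (t - T') / (T - T') * c = c * (t - T') / (T - T') by ring]

theorem linInterp_eq_threeAtom (hT : 0 < T) {t : ℝ} (ht : t ∈ Icc 0 T) :
    linInterp (η + ENNReal.ofReal c • Measure.dirac q) (η + ENNReal.ofReal c • Measure.dirac q')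
        T t = threeAtom η q z q' (c * (1 - t / T)) 0 (c * (t / T)) := by
  have h₁ : 0 ≤ 1 - t / T := sub_nonneg.2 ((div_le_one hT).2 ht.2)
  have h₂ : 0 ≤ t / T := div_nonneg ht.1 hT.le
  have hη : ENNReal.ofReal (1 - t / T) • η + ENNReal.ofReal (t / T) • η = η := by
    rw [← add_smul, ← ENNReal.ofReal_add h₁ h₂, sub_add_cancel, ENNReal.ofReal_one, one_smul]
  rw [linInterp, threeAtom, mul_comm c, mul_comm c, ENNReal.ofReal_mul h₁, ENNReal.ofReal_mul h₂,
    ← smul_smul, ← smul_smul, smul_add, smul_add]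
  conv_rhs => rw [← hη]
  simp only [ENNReal.ofReal_zero, zero_smul, add_zero]
  abel

theorem linInterp_zero (μ ν : Measure X) (T : ℝ) : linInterp μ ν T 0 = μ := by
  simp [linInterp]

theorem linInterp_self (μ ν : Measure X) {T : ℝ} (hT : T ≠ 0) : linInterp μ ν T T = ν := by
  simp [linInterp, hT]

theorem brokenGeodesic_zero (hT' : 0 ≤ T') :
    brokenGeodesic η c T T' q z q' 0 = η + ENNReal.ofReal c • Measure.dirac q := by
  simp [brokenGeodesic, hT']

theorem brokenGeodesic_self (hT' : T' ≠ 0) :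
    brokenGeodesic η c T T' q z q' T' = η + ENNReal.ofReal c • Measure.dirac z := by
  simp [brokenGeodesic, hT']

theorem brokenGeodesic_right (hT'T : T' < T) :
    brokenGeodesic η c T T' q z q' T = η + ENNReal.ofReal c • Measure.dirac q' := by
  simp [brokenGeodesic, hT'T, (sub_pos.2 hT'T).ne']

theorem brokenGeodesic_ne_linInterp [MeasurableSingletonClass X] [IsFiniteMeasure η]
    (hzq : z ≠ q) (hq'q : q' ≠ q) (hc : 0 < c) (hT'0 : 0 < T') (hT'T : T' < T) :
    brokenGeodesic η c T T' q z q' T' ≠ linInterp (η + ENNReal.ofReal c • Measure.dirac q)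
      (η + ENNReal.ofReal c • Measure.dirac q') T T' := by
  have hT0 : 0 < T := hT'0.trans hT'T
  intro h
  have hq := congrArg (· {q}) h
  simp only [brokenGeodesic_eq_threeAtom hT'0.ne', linInterp_eq_threeAtom (z := z) hT0
    ⟨hT'0.le, hT'T.le⟩, threeAtom_singleton_left hzq hq'q, sub_self, max_self, mul_zero,
    zero_div, ENNReal.ofReal_zero, add_zero] at hq
  have hpos : 0 < c * (1 - T' / T) := mul_pos hc (sub_pos.2 ((div_lt_one hT0).2 hT'T))
  exact (ENNReal.lt_add_right (measure_ne_top η {q}) (ENNReal.ofReal_pos.2 hpos).ne').ne hq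

end BrokenGeodesic

section Geodesics

variable {X : Type*} [MeasurableSpace X] [PseudoMetricSpace X] [OpensMeasurableSpace X]
  [MeasurableSingletonClass X] {η : Measure X} [IsFiniteMeasure η] {c T T' : ℝ} {q z q' : X}

theorem isUnitSpeedGeodesicOn_brokenGeodesic (hη : HasFiniteFirstMoment η)
    (hseg : dist q z + dist z q' = dist q q') (hc : 0 < c) (hmass : η univ + ENNReal.ofReal c = 1)
    (hT'0 : 0 < T') (hT'T : T' < T) (hT' : T' = c * dist q z) (hT : T - T' = c * dist z q') :
    IsUnitSpeedGeodesicOn (brokenGeodesic η c T T' q z q') 0 T := by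
  have hTT' : 0 < T - T' := sub_pos.2 hT'T
  refine isUnitSpeedGeodesicOn_threeAtom hη hseg (C := T')
    (fun t _ => brokenGeodesic_eq_threeAtom hT'0.ne' t)
    (fun t ht => ⟨by positivity, ?_, by positivity⟩) (fun t _ => by ring) hmass
    (fun s _ t _ hst => by gcongr) (fun s _ t _ hst => by gcongr) (fun t _ => ?_)
  · rcases le_total t T' with h | h
    · rw [max_eq_right (sub_nonpos.2 h), max_eq_left (sub_nonneg.2 h)]
      have : c * (T' - t) / T' ≤ c := by rw [div_le_iff₀ hT'0]; nlinarith [ht.1]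
      simp only [mul_zero, zero_div, sub_zero, sub_nonneg, this]
    · rw [max_eq_left (sub_nonneg.2 h), max_eq_right (sub_nonpos.2 h)]
      have : c * (t - T') / (T - T') ≤ c := by rw [div_le_iff₀ hTT']; nlinarith [ht.2]
      simp only [mul_zero, zero_div, sub_zero, sub_nonneg, this]
  · have h₁ : c * max (T' - t) 0 / T' * dist q z = max (T' - t) 0 := by
      field_simp; rw [hT']; ring
    have h₃ : c * max (t - T') 0 / (T - T') * dist z q' = max (t - T') 0 := by
      field_simp; rw [hT]; ring
    rw [h₁, h₃]
    simpa using max_zero_sub_eq_self (T' - t)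

theorem isUnitSpeedGeodesicOn_linInterp (hη : HasFiniteFirstMoment η) (hc : 0 < c)
    (hmass : η univ + ENNReal.ofReal c = 1) (hT0 : 0 < T) (hT : T = c * dist q q') :
    IsUnitSpeedGeodesicOn (linInterp (η + ENNReal.ofReal c • Measure.dirac q)
      (η + ENNReal.ofReal c • Measure.dirac q') T) 0 T := by
  refine isUnitSpeedGeodesicOn_threeAtom hη (x₂ := q) (by simp) (C := 0)
    (fun t ht => linInterp_eq_threeAtom hT0 ht) (fun t ht => ⟨?_, le_rfl, ?_⟩)
    (fun t _ => by ring) hmass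
    (fun s _ t _ hst => by gcongr) (fun s _ t _ hst => by gcongr) (fun t _ => ?_)
  · exact mul_nonneg hc.le (sub_nonneg.2 ((div_le_one hT0).2 ht.2))
  · exact mul_nonneg hc.le (div_nonneg ht.1 hT0.le)
  · have hd : dist q q' ≠ 0 := by rintro hd; rw [hd, mul_zero] at hT; exact hT0.ne' hT
    rw [dist_self, hT]
    field_simp
    ring

end Geodesics

theorem stmt7_general {X : Type*} [MetricSpace X] [MeasurableSpace X] [BorelSpace X]
    (η : Measure X) [IsFiniteMeasure η] (hη : HasFiniteFirstMoment η)
    (c : ℝ) (hc : 0 < c) (q q' z : X) (hne : q ≠ q')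
    (hzq : z ≠ q)
    (hzseg : dist q z + dist z q' = dist q q')
    (μ ν : Measure X)
    (hμdef : μ = η + ENNReal.ofReal c • Measure.dirac q)
    (hνdef : ν = η + ENNReal.ofReal c • Measure.dirac q')
    (hμ : MemW1 μ)
    (T T' : ℝ) (hT : ENNReal.ofReal T = W1 μ ν) (hT0 : 0 < T)
    (hT' : ENNReal.ofReal T' = W1 μ (η + ENNReal.ofReal c • Measure.dirac z))
    (hT'0 : 0 < T') (hT'T : T' < T) :
    IsUnitSpeedGeodesicOn (brokenGeodesic η c T T' q z q') 0 T ∧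
    brokenGeodesic η c T T' q z q' 0 = μ ∧
    brokenGeodesic η c T T' q z q' T = ν ∧
    brokenGeodesic η c T T' q z q' T' = η + ENNReal.ofReal c • Measure.dirac z ∧
    (∃ t ∈ Icc (0 : ℝ) T, brokenGeodesic η c T T' q z q' t ≠ linInterp μ ν T t) ∧
    ∃ γ₁ γ₂ : ℝ → Measure X,
      IsUnitSpeedGeodesicOn γ₁ 0 T ∧ γ₁ 0 = μ ∧ γ₁ T = ν ∧
      IsUnitSpeedGeodesicOn γ₂ 0 T ∧ γ₂ 0 = μ ∧ γ₂ T = ν ∧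
      ∃ t ∈ Icc (0 : ℝ) T, γ₁ t ≠ γ₂ t := by
  subst hμdef hνdef
  have hmass : η univ + ENNReal.ofReal c = 1 := by simpa using hμ.1.measure_univ
  have hfin := hη.lintegral_edist_ne_top q'
  have hμ₃ : η + ENNReal.ofReal c • Measure.dirac q = threeAtom η q z q' c 0 0 := by
    simp [threeAtom]
  have hTv : T = c * dist q z + c * dist z q' := by
    rw [hμ₃, show η + ENNReal.ofReal c • Measure.dirac q' = threeAtom η q z q' 0 0 c by
      simp [threeAtom], W1_threeAtom hzseg hfin le_rfl le_rfl le_rfl le_rfl (by ring) hc.le hc.le,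
      ENNReal.ofReal_eq_ofReal_iff hT0.le (by positivity)] at hT
    linarith
  have hT'v : T' = c * dist q z := by
    rw [hμ₃, show η + ENNReal.ofReal c • Measure.dirac z = threeAtom η q z q' 0 c 0 by
      simp [threeAtom], W1_threeAtom hzseg hfin le_rfl le_rfl le_rfl hc.le (by ring) hc.le le_rfl,
      ENNReal.ofReal_eq_ofReal_iff hT'0.le (by positivity)] at hT'
    linarith
  have hbroken := isUnitSpeedGeodesicOn_brokenGeodesic hη hzseg hc hmass hT'0 hT'T hT'v
    (by linarith)
  have hlin := isUnitSpeedGeodesicOn_linInterp hη hc hmass hT0 (by rw [← hzseg]; linarith)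
  have hdiff := brokenGeodesic_ne_linInterp (η := η) hzq hne.symm hc hT'0 hT'T
  have hT'mem : T' ∈ Icc 0 T := ⟨hT'0.le, hT'T.le⟩
  refine ⟨hbroken, brokenGeodesic_zero hT'0.le, brokenGeodesic_right hT'T,
    brokenGeodesic_self hT'0.ne', ⟨T', hT'mem, hdiff⟩, _, _, hbroken,
    brokenGeodesic_zero hT'0.le, brokenGeodesic_right hT'T, hlin, linInterp_zero _ _ _,
    linInterp_self _ _ hT0.ne', T', hT'mem, hdiff⟩

theorem stmt7 {X : Type*} [MetricSpace X] [CompleteSpace X]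
    [TopologicalSpace.SeparableSpace X] [MeasurableSpace X] [BorelSpace X]
    (η : Measure X) [IsFiniteMeasure η] (hη : HasFiniteFirstMoment η)
    (c : ℝ) (hc : 0 < c) (q q' z : X) (hne : q ≠ q')
    (hzq : z ≠ q) (hzq' : z ≠ q')
    (hzseg : dist q z + dist z q' = dist q q')
    (μ ν : Measure X)
    (hμdef : μ = η + ENNReal.ofReal c • Measure.dirac q)
    (hνdef : ν = η + ENNReal.ofReal c • Measure.dirac q')
    (hμ : MemW1 μ) (hν : MemW1 ν)
    (T T' : ℝ) (hT : ENNReal.ofReal T = W1 μ ν) (hT0 : 0 < T)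
    (hT' : ENNReal.ofReal T' = W1 μ (η + ENNReal.ofReal c • Measure.dirac z))
    (hT'0 : 0 < T') (hT'T : T' < T) :
    IsUnitSpeedGeodesicOn (brokenGeodesic η c T T' q z q') 0 T ∧
    brokenGeodesic η c T T' q z q' 0 = μ ∧
    brokenGeodesic η c T T' q z q' T = ν ∧
    brokenGeodesic η c T T' q z q' T' = η + ENNReal.ofReal c • Measure.dirac z ∧
    (∃ t ∈ Icc (0 : ℝ) T, brokenGeodesic η c T T' q z q' t ≠ linInterp μ ν T t) ∧
    ∃ γ₁ γ₂ : ℝ → Measure X,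
      IsUnitSpeedGeodesicOn γ₁ 0 T ∧ γ₁ 0 = μ ∧ γ₁ T = ν ∧
      IsUnitSpeedGeodesicOn γ₂ 0 T ∧ γ₂ 0 = μ ∧ γ₂ T = ν ∧
      ∃ t ∈ Icc (0 : ℝ) T, γ₁ t ≠ γ₂ t :=
  stmt7_general η hη c hc q q' z hne hzq hzseg μ ν hμdef hνdef hμ T T' hT hT0 hT' hT'0 hT'T
end
end

section
/- Let V and W be real inner product spaces, let t ∈ (0,1), C₁ > 0, and let x₁, x₂ ∈ V be nonzero vectors with (1 + t(1−t))·C₁²·‖x₁‖·‖x₂‖ < 1, and let v ∈ W satisfy ‖v‖ ≤ C₁·‖x₁‖·‖x₂‖·‖ x₁/‖x₁‖ − x₂/‖x₂‖ ‖. If equality ‖t·x₁ + (1−t)·x₂‖² + t(1−t)(1 + t(1−t))·‖v‖² = (t‖x₁‖ + (1−t)‖x₂‖)² holds, then x₁/‖x₁‖ = x₂/‖x₂‖ and v = 0; if in addition (t‖x₁‖ + (1−t)‖x₂‖)² = t‖x₁‖² + (1−t)‖x₂‖², then x₁ = x₂. -/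
/-!
Expanding the square, `‖t x₁ + (1-t) x₂‖² = (t‖x₁‖ + (1-t)‖x₂‖)² - t(1-t) ‖x₁‖‖x₂‖ D²`, where `D` is
the distance between the unit vectors `x₁/‖x₁‖` and `x₂/‖x₂‖`. The equality hypothesis therefore
says `(1 + t(1-t)) ‖v‖² = ‖x₁‖‖x₂‖ D²`, while the bound on `v` gives
`(1 + t(1-t)) ‖v‖² ≤ (1 + t(1-t)) C₁² (‖x₁‖‖x₂‖)² D²`; the smallness assumption makes these
compatible only for `D = 0`, and then `v = 0`. Finally, equality in the convexity of `r ↦ r²`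
forces `‖x₁‖ = ‖x₂‖`, and two vectors with the same direction and the same norm coincide.
-/

open RealInnerProductSpace

section InnerProductSpace

variable {V : Type*} [NormedAddCommGroup V] [InnerProductSpace ℝ V]

theorem norm_mul_norm_mul_norm_inv_norm_smul_sub_sq (x y : V) :
    ‖x‖ * ‖y‖ * ‖‖x‖⁻¹ • x - ‖y‖⁻¹ • y‖ ^ 2 = 2 * (‖x‖ * ‖y‖ - ⟪x, y⟫) := by
  rcases eq_or_ne x 0 with rfl | hx
  · simp
  rcases eq_or_ne y 0 with rfl | hy
  · simp
  have ha : ‖x‖ ≠ 0 := norm_ne_zero_iff.mpr hx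
  have hb : ‖y‖ ≠ 0 := norm_ne_zero_iff.mpr hy
  rw [norm_sub_sq_real, real_inner_smul_left, real_inner_smul_right, norm_smul, norm_smul,
    norm_inv, norm_norm, norm_inv, norm_norm]
  field_simp
  ring

theorem norm_smul_add_one_sub_smul_sq (t : ℝ) (x y : V) :
    ‖t • x + (1 - t) • y‖ ^ 2 = (t * ‖x‖ + (1 - t) * ‖y‖) ^ 2
      - t * (1 - t) * (‖x‖ * ‖y‖ * ‖‖x‖⁻¹ • x - ‖y‖⁻¹ • y‖ ^ 2) := by
  rw [norm_mul_norm_mul_norm_inv_norm_smul_sub_sq, norm_add_sq_real, real_inner_smul_left,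
    real_inner_smul_right, norm_smul, norm_smul, Real.norm_eq_abs, Real.norm_eq_abs,
    mul_pow, mul_pow, sq_abs, sq_abs]
  ring

end InnerProductSpace

theorem eq_zero_of_mul_sq_eq_of_le {c C P D n : ℝ} (hP : 0 < P) (hc : 0 ≤ c)
    (hsmall : c * C ^ 2 * P < 1) (hn : 0 ≤ n) (hnD : n ≤ C * P * D)
    (hkey : c * n ^ 2 = P * D ^ 2) : D = 0 := by
  have hsq : n ^ 2 ≤ (C * P * D) ^ 2 := pow_le_pow_left₀ hn hnD 2
  have hle : P * D ^ 2 * (1 - c * C ^ 2 * P) ≤ 0 := by nlinarith [mul_le_mul_of_nonneg_left hsq hc]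
  have hD2 : D ^ 2 ≤ 0 := by
    by_contra! h
    exact hle.not_gt (mul_pos (mul_pos hP h) (by linarith))
  exact pow_eq_zero_iff two_ne_zero |>.mp (le_antisymm hD2 (sq_nonneg D))

theorem eq_of_sq_convex_comb_eq {t a b : ℝ} (ht : t ∈ Set.Ioo (0 : ℝ) 1)
    (h : (t * a + (1 - t) * b) ^ 2 = t * a ^ 2 + (1 - t) * b ^ 2) : a = b := by
  have hs : 0 < t * (1 - t) := mul_pos ht.1 (sub_pos.mpr ht.2)
  have h0 : t * (1 - t) * (a - b) ^ 2 = 0 := by linear_combination -h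
  have := pow_eq_zero_iff two_ne_zero |>.mp ((mul_eq_zero.mp h0).resolve_left hs.ne')
  linarith

theorem stmt18_general {V W : Type*} [NormedAddCommGroup V] [InnerProductSpace ℝ V]
    [NormedAddCommGroup W] [InnerProductSpace ℝ W]
    (t C₁ : ℝ) (ht : t ∈ Set.Ioo (0 : ℝ) 1)
    (x₁ x₂ : V) (hx₁ : x₁ ≠ 0) (hx₂ : x₂ ≠ 0)
    (hsmall : (1 + t * (1 - t)) * C₁ ^ 2 * ‖x₁‖ * ‖x₂‖ < 1) (v : W)
    (hv : ‖v‖ ≤ C₁ * ‖x₁‖ * ‖x₂‖ * ‖‖x₁‖⁻¹ • x₁ - ‖x₂‖⁻¹ • x₂‖)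
    (heq : ‖t • x₁ + (1 - t) • x₂‖ ^ 2
        + t * (1 - t) * (1 + t * (1 - t)) * ‖v‖ ^ 2
      = (t * ‖x₁‖ + (1 - t) * ‖x₂‖) ^ 2) :
    (‖x₁‖⁻¹ • x₁ = ‖x₂‖⁻¹ • x₂ ∧ v = 0) ∧
    ((t * ‖x₁‖ + (1 - t) * ‖x₂‖) ^ 2 = t * ‖x₁‖ ^ 2 + (1 - t) * ‖x₂‖ ^ 2 →
      x₁ = x₂) := by
  set D := ‖‖x₁‖⁻¹ • x₁ - ‖x₂‖⁻¹ • x₂‖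
  have hs : 0 < t * (1 - t) := mul_pos ht.1 (sub_pos.mpr ht.2)
  have hkey : (1 + t * (1 - t)) * ‖v‖ ^ 2 = ‖x₁‖ * ‖x₂‖ * D ^ 2 := by
    rw [norm_smul_add_one_sub_smul_sq] at heq
    exact mul_left_cancel₀ hs.ne' (by linear_combination heq)
  have hD : D = 0 :=
    eq_zero_of_mul_sq_eq_of_le (C := C₁)
      (mul_pos (norm_pos_iff.mpr hx₁) (norm_pos_iff.mpr hx₂)) (by positivity) (by linarith) (norm_nonneg v) (by linarith) hkey
  have hunit : ‖x₁‖⁻¹ • x₁ = ‖x₂‖⁻¹ • x₂ := sub_eq_zero.mp (norm_eq_zero.mp hD)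
  have hv0 : v = 0 := by
    rw [hD, zero_pow two_ne_zero, mul_zero, mul_eq_zero, sq_eq_zero_iff, norm_eq_zero] at hkey
    exact hkey.resolve_left (by positivity)
  refine ⟨⟨hunit, hv0⟩, fun hconv => ?_⟩
  exact (sameRay_iff_inv_norm_smul_eq.mpr (Or.inr (Or.inr hunit))).eq_of_norm_eq
    (eq_of_sq_convex_comb_eq ht hconv)

theorem stmt18 {V W : Type*} [NormedAddCommGroup V] [InnerProductSpace ℝ V]
    [NormedAddCommGroup W] [InnerProductSpace ℝ W]
    (t C₁ : ℝ) (ht : t ∈ Set.Ioo (0 : ℝ) 1) (hC₁ : 0 < C₁)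
    (x₁ x₂ : V) (hx₁ : x₁ ≠ 0) (hx₂ : x₂ ≠ 0)
    (hsmall : (1 + t * (1 - t)) * C₁ ^ 2 * ‖x₁‖ * ‖x₂‖ < 1) (v : W)
    (hv : ‖v‖ ≤ C₁ * ‖x₁‖ * ‖x₂‖ * ‖‖x₁‖⁻¹ • x₁ - ‖x₂‖⁻¹ • x₂‖)
    (heq : ‖t • x₁ + (1 - t) • x₂‖ ^ 2
        + t * (1 - t) * (1 + t * (1 - t)) * ‖v‖ ^ 2
      = (t * ‖x₁‖ + (1 - t) * ‖x₂‖) ^ 2) :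
    (‖x₁‖⁻¹ • x₁ = ‖x₂‖⁻¹ • x₂ ∧ v = 0) ∧
    ((t * ‖x₁‖ + (1 - t) * ‖x₂‖) ^ 2 = t * ‖x₁‖ ^ 2 + (1 - t) * ‖x₂‖ ^ 2 →
      x₁ = x₂) :=
  stmt18_general t C₁ ht x₁ x₂ hx₁ hx₂ hsmall v hv heq
end
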